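/- arXiv:1801.02851 — 2 statements merged into one kernel-verified Lean document; each statement's English description precedes it below -/
import Mathlib

section
/- Let (Ω, μ) be a probability space and n ≥ 1. For k = 1,...,n let a_k, A_k, b_k, B_k : Ω → ℝ be measurable functions such that A_k, B_k, a_k, b_k are integrable, each a_k and b_k is square-integrable, and the products a_k a_l and b_k b_l are integrable for all k, l. Let c_1,...,c_n ∈ ℝ and suppose that for (μ-almost) every ω ∈ Ω and every k: A_k(ω) − a_k(ω)² + B_k(ω) − b_k(ω)² ≥ c_k. Fix t_1,...,t_n ∈ ℝ and define Δ_U² = ∫_Ω [ Σ_{k=1}^n t_k² A_k(ω) + Σ_{k≠l} t_k t_l a_k(ω) a_l(ω) ] dμ(ω) − ( ∫_Ω Σ_{k=1}^n t_k a_k(ω) dμ(ω) )², and Δ_V² analogously with B_k and b_k in place of A_k and a_k. Then Δ_U² + Δ_V² ≥ Σ_{k=1}^n c_k t_k². -/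
open MeasureTheory Finset

lemma var_nonneg' {Ω : Type*} [MeasurableSpace Ω] (μ : Measure Ω)
    [IsProbabilityMeasure μ] (f : Ω → ℝ) (hf : Integrable f μ)
    (hf2 : Integrable (fun ω => f ω ^ 2) μ) :
    (∫ ω, f ω ∂μ) ^ 2 ≤ ∫ ω, f ω ^ 2 ∂μ := by
  set m := ∫ ω, f ω ∂μ with hm
  have h1 : Integrable (fun ω => f ω ^ 2 - 2 * m * f ω) μ := hf2.sub (hf.const_mul _)
  have h : ∫ ω, (f ω - m) ^ 2 ∂μ = (∫ ω, f ω ^ 2 ∂μ) - m ^ 2 := by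
    have e : ∀ ω, (f ω - m) ^ 2 = (f ω ^ 2 - 2 * m * f ω) + m ^ 2 := fun ω => by ring
    simp_rw [e]
    rw [integral_add h1 (integrable_const _), integral_sub hf2 (hf.const_mul _),
        integral_const_mul, integral_const]
    simp [← hm]
    ring
  have h0 : 0 ≤ ∫ ω, (f ω - m) ^ 2 ∂μ := integral_nonneg fun ω => sq_nonneg _
  linarith

lemma offdiag_eq (n : ℕ) (t g : Fin n → ℝ) :
    (∑ k : Fin n, ∑ l ∈ Finset.univ.filter (fun l => l ≠ k),
      t k * t l * (g k * g l))
    = (∑ k : Fin n, t k * g k) ^ 2 - ∑ k : Fin n, t k ^ 2 * g k ^ 2 := by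
  rw [sq, Finset.sum_mul_sum, ← Finset.sum_sub_distrib]
  refine Finset.sum_congr rfl fun k _ => ?_
  rw [Finset.filter_ne', ← Finset.add_sum_erase _ _ (Finset.mem_univ k)]
  have e : ∀ l ∈ Finset.univ.erase k,
      t k * t l * (g k * g l) = t k * g k * (t l * g l) := fun l _ => by ring
  rw [Finset.sum_congr rfl e]
  ring

lemma one_side {Ω : Type*} [MeasurableSpace Ω] (μ : Measure Ω) [IsProbabilityMeasure μ]
    (n : ℕ) (t : Fin n → ℝ) (a A : Fin n → Ω → ℝ)
    (hAint : ∀ k, Integrable (A k) μ) (haint : ∀ k, Integrable (a k) μ)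
    (hasq : ∀ k, Integrable (fun ω => a k ω ^ 2) μ)
    (haa : ∀ k l, Integrable (fun ω => a k ω * a l ω) μ) :
    (∫ ω, (∑ k : Fin n, t k ^ 2 * A k ω +
        ∑ k : Fin n, ∑ l ∈ Finset.univ.filter (fun l => l ≠ k),
          t k * t l * (a k ω * a l ω)) ∂μ) -
      (∫ ω, ∑ k : Fin n, t k * a k ω ∂μ) ^ 2
    ≥ ∫ ω, ∑ k : Fin n, t k ^ 2 * (A k ω - a k ω ^ 2) ∂μ := by
  have hfint : Integrable (fun ω => ∑ k : Fin n, t k * a k ω) μ :=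
    integrable_finset_sum _ fun k _ => (haint k).const_mul _
  have hf2int : Integrable (fun ω => (∑ k : Fin n, t k * a k ω) ^ 2) μ := by
    have e : (fun ω => (∑ k : Fin n, t k * a k ω) ^ 2)
        = fun ω => ∑ k : Fin n, ∑ l : Fin n, (t k * t l) * (a k ω * a l ω) := by
      funext ω
      rw [sq, Finset.sum_mul_sum]
      exact Finset.sum_congr rfl fun k _ => Finset.sum_congr rfl fun l _ => by ring
    rw [e]
    exact integrable_finset_sum _ fun k _ =>
      integrable_finset_sum _ fun l _ => (haa k l).const_mul _
  have hdiag : Integrable (fun ω => ∑ k : Fin n, t k ^ 2 * (A k ω - a k ω ^ 2)) μ :=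
    integrable_finset_sum _ fun k _ => ((hAint k).sub (hasq k)).const_mul _
  have hpt : ∀ ω, (∑ k : Fin n, t k ^ 2 * A k ω +
        ∑ k : Fin n, ∑ l ∈ Finset.univ.filter (fun l => l ≠ k),
          t k * t l * (a k ω * a l ω))
      = (∑ k : Fin n, t k ^ 2 * (A k ω - a k ω ^ 2))
        + (∑ k : Fin n, t k * a k ω) ^ 2 := by
    intro ω
    have h1 : (∑ k : Fin n, ∑ l ∈ Finset.univ.filter (fun l => l ≠ k),
          t k * t l * (a k ω * a l ω))
        = (∑ k : Fin n, t k * a k ω) ^ 2 - ∑ k : Fin n, t k ^ 2 * (a k ω) ^ 2 :=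
      offdiag_eq n t fun k => a k ω
    have h2 : (∑ k : Fin n, t k ^ 2 * (A k ω - a k ω ^ 2))
        = ∑ k : Fin n, t k ^ 2 * A k ω - ∑ k : Fin n, t k ^ 2 * (a k ω) ^ 2 := by
      rw [← Finset.sum_sub_distrib]
      exact Finset.sum_congr rfl fun k _ => by ring
    rw [h1, h2]; ring
  have hI : (∫ ω, (∑ k : Fin n, t k ^ 2 * A k ω +
        ∑ k : Fin n, ∑ l ∈ Finset.univ.filter (fun l => l ≠ k),
          t k * t l * (a k ω * a l ω)) ∂μ)
      = (∫ ω, ∑ k : Fin n, t k ^ 2 * (A k ω - a k ω ^ 2) ∂μ)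
        + ∫ ω, (∑ k : Fin n, t k * a k ω) ^ 2 ∂μ := by
    simp_rw [hpt]
    exact integral_add hdiag hf2int
  have hvar := var_nonneg' μ _ hfint hf2int
  rw [hI]
  linarith

/-- Let `(Ω, μ)` be a probability space and for `k = 1,…,n` let
`a k, A k, b k, B k : Ω → ℝ` be measurable, with `A k, B k, a k, b k`
integrable, `a k` and `b k` square-integrable, and the products
`a k * a l`, `b k * b l` integrable.  If almost everywhere
`A k ω - (a k ω)² + B k ω - (b k ω)² ≥ c k` for every `k`, then for any
reals `t k` the variances
`ΔU² = ∫ (∑ k, t k² A k + ∑_{k ≠ l} t k t l a k a l) dμ - (∫ ∑ k, t k a k dμ)²`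
(and `ΔV²` analogously) satisfy `ΔU² + ΔV² ≥ ∑ k, c k t k²`. -/
theorem mixture_variance_bound
    (Ω : Type*) [MeasurableSpace Ω] (μ : Measure Ω) [IsProbabilityMeasure μ]
    (n : ℕ) (hn : 1 ≤ n)
    (a A b B : Fin n → Ω → ℝ)
    (hameas : ∀ k, Measurable (a k)) (hAmeas : ∀ k, Measurable (A k))
    (hbmeas : ∀ k, Measurable (b k)) (hBmeas : ∀ k, Measurable (B k))
    (hAint : ∀ k, Integrable (A k) μ) (hBint : ∀ k, Integrable (B k) μ)
    (haint : ∀ k, Integrable (a k) μ) (hbint : ∀ k, Integrable (b k) μ)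
    (hasq : ∀ k, Integrable (fun ω => a k ω ^ 2) μ)
    (hbsq : ∀ k, Integrable (fun ω => b k ω ^ 2) μ)
    (haa : ∀ k l, Integrable (fun ω => a k ω * a l ω) μ)
    (hbb : ∀ k l, Integrable (fun ω => b k ω * b l ω) μ)
    (c : Fin n → ℝ)
    (hpt : ∀ᵐ ω ∂μ, ∀ k : Fin n,
      A k ω - a k ω ^ 2 + (B k ω - b k ω ^ 2) ≥ c k)
    (t : Fin n → ℝ)
    (ΔU2 ΔV2 : ℝ)
    (hU : ΔU2 =
      (∫ ω, (∑ k : Fin n, t k ^ 2 * A k ω +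
        ∑ k : Fin n, ∑ l ∈ Finset.univ.filter (fun l => l ≠ k),
          t k * t l * (a k ω * a l ω)) ∂μ) -
      (∫ ω, ∑ k : Fin n, t k * a k ω ∂μ) ^ 2)
    (hV : ΔV2 =
      (∫ ω, (∑ k : Fin n, t k ^ 2 * B k ω +
        ∑ k : Fin n, ∑ l ∈ Finset.univ.filter (fun l => l ≠ k),
          t k * t l * (b k ω * b l ω)) ∂μ) -
      (∫ ω, ∑ k : Fin n, t k * b k ω ∂μ) ^ 2) :
    ΔU2 + ΔV2 ≥ ∑ k : Fin n, c k * t k ^ 2 := by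
  have hA := one_side μ n t a A hAint haint hasq haa
  have hB := one_side μ n t b B hBint hbint hbsq hbb
  have intA : Integrable (fun ω => ∑ k : Fin n, t k ^ 2 * (A k ω - a k ω ^ 2)) μ :=
    integrable_finset_sum _ fun k _ => ((hAint k).sub (hasq k)).const_mul _
  have intB : Integrable (fun ω => ∑ k : Fin n, t k ^ 2 * (B k ω - b k ω ^ 2)) μ :=
    integrable_finset_sum _ fun k _ => ((hBint k).sub (hbsq k)).const_mul _
  have hsum : (∫ ω, ∑ k : Fin n, t k ^ 2 * (A k ω - a k ω ^ 2) ∂μ)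
      + (∫ ω, ∑ k : Fin n, t k ^ 2 * (B k ω - b k ω ^ 2) ∂μ)
      = ∫ ω, ∑ k : Fin n,
          t k ^ 2 * ((A k ω - a k ω ^ 2) + (B k ω - b k ω ^ 2)) ∂μ := by
    rw [← integral_add intA intB]
    congr 1; funext ω
    rw [← Finset.sum_add_distrib]
    exact Finset.sum_congr rfl fun k _ => by ring
  have hge : (∫ ω, ∑ k : Fin n,
        t k ^ 2 * ((A k ω - a k ω ^ 2) + (B k ω - b k ω ^ 2)) ∂μ)
      ≥ ∑ k : Fin n, c k * t k ^ 2 := by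
    have hc : (∑ k : Fin n, c k * t k ^ 2)
        = ∫ _ω, (∑ k : Fin n, c k * t k ^ 2) ∂μ := by
      rw [integral_const]; simp
    rw [hc]
    refine integral_mono_ae (integrable_const _) (intA.add intB |>.congr ?_) ?_
    · filter_upwards with ω
      simp only [Pi.add_apply]
      rw [← Finset.sum_add_distrib]
      exact Finset.sum_congr rfl fun k _ => by ring
    · filter_upwards [hpt] with ω hω
      refine Finset.sum_le_sum fun k _ => ?_
      have := hω k
      nlinarith [sq_nonneg (t k)]
  linarith
end

section
/- Let λ = 1/10. For real numbers α_1,...,α_4, β_1,...,β_4 define the symmetric 2×2 real matrix G(α,β) with entries: G_{11} = (8/5 + λ)(α_1² + α_2² + β_1² + β_2²) + (4/5)(α_1 α_2 + β_1 β_2) − α_1 β_1 − α_2 β_2; G_{12} = (1/10)(α_1 + α_2)(α_3 + α_4) + (1/10)(β_1 + β_2)(β_3 + β_4); G_{22} = (1/2 + λ)(α_3² + α_4² + β_3² + β_4²) − (1/4)(α_3 α_4 + β_3 β_4) − α_3 β_3 − α_4 β_4. Then the determinant G_{11} G_{22} − G_{12}² is not bounded below: for every real C there exist α_1,...,α_4,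 β_1,...,β_4 ∈ ℝ with G_{11} G_{22} − G_{12}² < C. -/
/-- For `λ = 1/10`, the determinant `G₁₁ G₂₂ − G₁₂²` of the
symmetric 2×2 matrix `G(α,β)` arising from the mixed bipartite four-mode
Gaussian state (partition `{1,2} | {3,4}`) is unbounded below over the real
parameters `α₁,…,α₄, β₁,…,β₄`. -/
theorem four_mode_mixed_det_unbounded (lam : ℝ) (hlam : lam = 1 / 10) :
    ∀ C : ℝ, ∃ α₁ α₂ α₃ α₄ β₁ β₂ β₃ β₄ : ℝ,
      ((8 / 5 + lam) * (α₁ ^ 2 + α₂ ^ 2 + β₁ ^ 2 + β₂ ^ 2) +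
          (4 / 5) * (α₁ * α₂ + β₁ * β₂) - α₁ * β₁ - α₂ * β₂) *
        ((1 / 2 + lam) * (α₃ ^ 2 + α₄ ^ 2 + β₃ ^ 2 + β₄ ^ 2) -
          (1 / 4) * (α₃ * α₄ + β₃ * β₄) - α₃ * β₃ - α₄ * β₄) -
        ((1 / 10) * (α₁ + α₂) * (α₃ + α₄) +
          (1 / 10) * (β₁ + β₂) * (β₃ + β₄)) ^ 2 < C := by
  intro C
  refine ⟨1, 0, 3 * (|C| + 1), 3 * (|C| + 1), 0, 0, 3 * (|C| + 1), 3 * (|C| + 1), ?_⟩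
  have h1 : (0:ℝ) ≤ |C| := abs_nonneg C
  have h2 : -|C| ≤ C := neg_abs_le C
  subst hlam
  nlinarith [sq_nonneg (|C| + 1), sq_nonneg C]
end
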